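/- arXiv:1604.01179 — 2 statements merged into one kernel-verified Lean document; each statement's English description precedes it below -/
import Mathlib

section
/- For the two-stage splitting scheme S(h) = e^{b_2 h B} e^{a_2 h A} e^{b_1 h B} e^{a_1 h A} with a_1 + a_2 = 1 and b_1 + b_2 = 1, the second derivative of the local error L(h) = S(h) - e^{h(A+B)} at h = 0 equals (2 a_2 b_1 - 1)[A,B], where [A,B] = AB - BA. -/
set_option maxHeartbeats 2000000

open NormedSpace

/-- Continuous linear operators on `ℝⁿ` ("n×n matrices"). -/
abbrev Op (n : ℕ) := (Fin n → ℝ) →L[ℝ] (Fin n → ℝ)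

noncomputable def Ee {n : ℕ} (c : ℝ) (M : Op n) (h : ℝ) : Op n := exp ((c * h) • M)

noncomputable def Dd {n : ℕ} (c : ℝ) (M : Op n) (h : ℝ) : Op n := c • (Ee c M h * M)

lemma expD {n : ℕ} (c : ℝ) (M : Op n) (h : ℝ) :
    HasDerivAt (fun t : ℝ => Ee c M t) (Dd c M h) h := by
  have h1 : HasDerivAt (fun u : ℝ => exp (u • M)) (exp ((c * h) • M) * M) (c * h) :=
    hasDerivAt_exp_smul_const M (c * h)
  have h2 : HasDerivAt (fun t : ℝ => c * t) c h := by
    simpa using (hasDerivAt_id h).const_mul c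
  exact h1.scomp h h2

lemma DdD {n : ℕ} (c : ℝ) (M : Op n) (h : ℝ) :
    HasDerivAt (fun t : ℝ => Dd c M t) (c • (Dd c M h * M)) h := by
  have := ((expD c M h).mul_const M).const_smul c
  simpa [Dd, Pi.smul_def] using this

@[simp] lemma Ee_zero {n : ℕ} (c : ℝ) (M : Op n) : Ee c M 0 = 1 := by
  simp [Ee, exp_zero]

@[simp] lemma Dd_zero {n : ℕ} (c : ℝ) (M : Op n) : Dd c M 0 = c • M := by
  simp [Dd]

/-- For the two-stage splitting scheme
`S(h) = e^{b₂ h B} e^{a₂ h A} e^{b₁ h B} e^{a₁ h A}` with `a₁ + a₂ = 1` and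
`b₁ + b₂ = 1`, the second derivative at `h = 0` of the local error
`L(h) = S(h) - e^{h(A+B)}` equals `(2 a₂ b₁ - 1)·[A,B]` where `[A,B] = AB - BA`. -/
theorem stmt1 (a₁ a₂ b₁ b₂ : ℝ) (ha : a₁ + a₂ = 1) (hb : b₁ + b₂ = 1)
    (n : ℕ) (A B : Op n) :
    iteratedDeriv 2
      (fun h : ℝ =>
        exp ((b₂ * h) • B) * exp ((a₂ * h) • A) *
          (exp ((b₁ * h) • B) * exp ((a₁ * h) • A)) -
        exp (h • (A + B))) 0
    = (2 * a₂ * b₁ - 1) • (A * B - B * A) := by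
  have hF : ∀ h : ℝ, HasDerivAt
      (fun h : ℝ =>
        exp ((b₂ * h) • B) * exp ((a₂ * h) • A) *
          (exp ((b₁ * h) • B) * exp ((a₁ * h) • A)) -
        exp (h • (A + B)))
      ((Dd b₂ B h * Ee a₂ A h + Ee b₂ B h * Dd a₂ A h) * (Ee b₁ B h * Ee a₁ A h)
        + Ee b₂ B h * Ee a₂ A h * (Dd b₁ B h * Ee a₁ A h + Ee b₁ B h * Dd a₁ A h)
        - exp (h • (A + B)) * (A + B)) h := fun h =>
    ((((expD b₂ B h).mul (expD a₂ A h)).mul ((expD b₁ B h).mul (expD a₁ A h))).sub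
      (hasDerivAt_exp_smul_const (A + B) h))
  have hd1 : (deriv (fun h : ℝ =>
        exp ((b₂ * h) • B) * exp ((a₂ * h) • A) *
          (exp ((b₁ * h) • B) * exp ((a₁ * h) • A)) -
        exp (h • (A + B))))
      = fun h : ℝ =>
        (Dd b₂ B h * Ee a₂ A h + Ee b₂ B h * Dd a₂ A h) * (Ee b₁ B h * Ee a₁ A h)
        + Ee b₂ B h * Ee a₂ A h * (Dd b₁ B h * Ee a₁ A h + Ee b₁ B h * Dd a₁ A h)
        - exp (h • (A + B)) * (A + B) := funext fun h => (hF h).deriv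
  have hF2 : HasDerivAt (fun h : ℝ =>
        (Dd b₂ B h * Ee a₂ A h + Ee b₂ B h * Dd a₂ A h) * (Ee b₁ B h * Ee a₁ A h)
        + Ee b₂ B h * Ee a₂ A h * (Dd b₁ B h * Ee a₁ A h + Ee b₁ B h * Dd a₁ A h)
        - exp (h • (A + B)) * (A + B))
      (((b₂ • (Dd b₂ B 0 * B) * Ee a₂ A 0 + Dd b₂ B 0 * Dd a₂ A 0)
          + (Dd b₂ B 0 * Dd a₂ A 0 + Ee b₂ B 0 * (a₂ • (Dd a₂ A 0 * A))))
            * (Ee b₁ B 0 * Ee a₁ A 0)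
        + (Dd b₂ B 0 * Ee a₂ A 0 + Ee b₂ B 0 * Dd a₂ A 0)
            * (Dd b₁ B 0 * Ee a₁ A 0 + Ee b₁ B 0 * Dd a₁ A 0)
        + ((Dd b₂ B 0 * Ee a₂ A 0 + Ee b₂ B 0 * Dd a₂ A 0)
            * (Dd b₁ B 0 * Ee a₁ A 0 + Ee b₁ B 0 * Dd a₁ A 0)
          + Ee b₂ B 0 * Ee a₂ A 0 *
            ((b₁ • (Dd b₁ B 0 * B) * Ee a₁ A 0 + Dd b₁ B 0 * Dd a₁ A 0)
              + (Dd b₁ B 0 * Dd a₁ A 0 + Ee b₁ B 0 * (a₁ • (Dd a₁ A 0 * A)))))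
        - exp ((0:ℝ) • (A + B)) * (A + B) * (A + B)) 0 :=
    (((((DdD b₂ B 0).mul (expD a₂ A 0)).add ((expD b₂ B 0).mul (DdD a₂ A 0))).mul
        ((expD b₁ B 0).mul (expD a₁ A 0))).add
      (((expD b₂ B 0).mul (expD a₂ A 0)).mul
        ((((DdD b₁ B 0).mul (expD a₁ A 0)).add ((expD b₁ B 0).mul (DdD a₁ A 0)))))).sub
      ((hasDerivAt_exp_smul_const (A + B) (0:ℝ)).mul_const (A + B))
  rw [iteratedDeriv_succ, iteratedDeriv_one, hd1, hF2.deriv]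
  have ha' : a₁ = 1 - a₂ := by linarith
  have hb' : b₂ = 1 - b₁ := by linarith
  subst ha' hb'
  simp only [Ee_zero, Dd_zero, zero_smul, exp_zero, one_mul, mul_one, smul_smul]
  simp only [smul_mul_assoc, mul_smul_comm, mul_add, add_mul, smul_add, smul_sub, sub_smul,
    add_smul, mul_sub, sub_mul, smul_smul]
  match_scalars <;> ring
end

section
/- If a one-step method S on R^n is smooth and satisfies the symmetry relation S(-h, S(h, u)) = u for all h near 0 and all u, and S approximates the exact flow φ of a smooth ODE with local error of order p (p odd), i.e. S(h,u) - φ(h,u) = C(u) h^{p+1} + O(h^{p+2}), then in fact C(u) = 0; that is, symmetric one-step schemes have even order. -/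
open Asymptotics Filter Set
open scoped ContDiff Topology

section Toolbox
variable {E : Type*} [NormedAddCommGroup E] [NormedSpace ℝ E]

lemma nat_le_inf (n : ℕ) : ((n : WithTop ℕ∞)) ≤ ∞ := by
  rw [show ((n:WithTop ℕ∞)) = ((n:ℕ∞) : WithTop ℕ∞) by rfl]
  exact_mod_cast (le_top : (n:ℕ∞) ≤ ⊤)

lemma inf_add_one_le : (∞ : WithTop ℕ∞) + 1 ≤ ∞ := le_of_eq rfl

lemma abs_le_of_mem_uIcc {s t : ℝ} (hs : s ∈ uIcc 0 t) : |s| ≤ |t| := by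
  rcases mem_uIcc.mp hs with ⟨h1, h2⟩ | ⟨h1, h2⟩
  · exact abs_le.mpr ⟨by nlinarith [abs_nonneg t, le_abs_self t], by linarith [le_abs_self t]⟩
  · exact abs_le.mpr ⟨by linarith [neg_abs_le t], by nlinarith [abs_nonneg t]⟩

/-- MVT-type bound: if `f 0 = 0` and `‖f'‖ ≤ B` on `uIcc 0 t` then `‖f t‖ ≤ B * |t|`. -/
lemma norm_le_of_hasDerivAt_zero {f f' : ℝ → E} {B t : ℝ}
    (hf : ∀ s ∈ uIcc 0 t, HasDerivAt f (f' s) s) (h0 : f 0 = 0)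
    (hB : ∀ s ∈ uIcc 0 t, ‖f' s‖ ≤ B) : ‖f t‖ ≤ B * |t| := by
  have := Convex.norm_image_sub_le_of_norm_hasDerivWithin_le
    (f := f) (f' := f') (s := uIcc 0 t) (C := B)
    (fun s hs => (hf s hs).hasDerivWithinAt) hB (convex_uIcc 0 t)
    left_mem_uIcc right_mem_uIcc
  simpa [h0, Real.norm_eq_abs] using this

/-- Iterated MVT bound. -/
lemma key_bound {a M : ℝ} (hM : 0 ≤ M) :
    ∀ (m : ℕ) (D : ℕ → ℝ → E),
      (∀ i ≤ m, ∀ t, HasDerivAt (D i) (D (i+1) t) t) →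
      (∀ i ≤ m, D i 0 = 0) →
      (∀ t, |t| ≤ a → ‖D (m+1) t‖ ≤ M) →
      ∀ t, |t| ≤ a → ‖D 0 t‖ ≤ M * |t| ^ (m+1) := by
  intro m
  induction m with
  | zero =>
    intro D hd h0 hb t ht
    have := norm_le_of_hasDerivAt_zero (f := D 0) (f' := D 1) (t := t)
      (fun s _ => hd 0 le_rfl s) (h0 0 le_rfl)
      (fun s hs => hb s (le_trans (abs_le_of_mem_uIcc hs) ht))
    simpa using this
  | succ m ih =>
    intro D hd h0 hb t ht
    have h1 : ∀ s, |s| ≤ a → ‖D 1 s‖ ≤ M * |s| ^ (m+1) :=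
      ih (fun i => D (i+1)) (fun i hi t => hd (i+1) (by omega) t)
        (fun i hi => h0 (i+1) (by omega)) (fun t ht => hb t ht)
    have := norm_le_of_hasDerivAt_zero (f := D 0) (f' := D 1) (t := t)
      (fun s _ => hd 0 (by omega) s) (h0 0 (by omega))
      (B := M * |t| ^ (m+1))
      (fun s hs => le_trans (h1 s (le_trans (abs_le_of_mem_uIcc hs) ht))
        (by
          have := abs_le_of_mem_uIcc hs
          have : |s| ^ (m+1) ≤ |t| ^ (m+1) := pow_le_pow_left₀ (abs_nonneg s) this _
          nlinarith [abs_nonneg t, pow_nonneg (abs_nonneg s) (m+1)]))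
    calc ‖D 0 t‖ ≤ M * |t| ^ (m+1) * |t| := this
    _ = M * |t| ^ (m+1+1) := by ring

lemma iteratedDeriv_smooth {f : ℝ → E} (hf : ContDiff ℝ ∞ f) (i : ℕ) :
    ContDiff ℝ ∞ (iteratedDeriv i f) := by
  rw [iteratedDeriv_eq_iterate]; exact hf.iterate_deriv i

lemma iteratedDeriv_hasDerivAt {f : ℝ → E} (hf : ContDiff ℝ ∞ f) (i : ℕ) (t : ℝ) :
    HasDerivAt (iteratedDeriv i f) (iteratedDeriv (i+1) f t) t := by
  have h1 := iteratedDeriv_smooth hf i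
  have h2 := ((contDiff_infty_iff_deriv.mp h1).1 t).hasDerivAt
  rwa [iteratedDeriv_succ]

/-- L3: vanishing iterated derivatives at `0` give a big-O bound. -/
lemma isBigO_of_iteratedDeriv_zero {f : ℝ → E} (hf : ContDiff ℝ ∞ f) (m : ℕ)
    (h0 : ∀ i ≤ m, iteratedDeriv i f 0 = 0) :
    f =O[𝓝 (0:ℝ)] fun t => t ^ (m+1) := by
  obtain ⟨M, hM⟩ := isCompact_Icc.exists_bound_of_continuousOn
    (s := Icc (-1:ℝ) 1) ((iteratedDeriv_smooth hf (m+1)).continuous.continuousOn)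
  set M' := max M 0 with hM'
  have key := key_bound (le_max_right M 0) m (fun i => iteratedDeriv i f)
    (fun i _ t => iteratedDeriv_hasDerivAt hf i t) h0
    (fun t ht => le_trans (hM t (abs_le.mp ht)) (le_max_left M 0))
  rw [isBigO_iff]
  refine ⟨M', ?_⟩
  have hmem : Icc (-1:ℝ) 1 ∈ 𝓝 (0:ℝ) := Icc_mem_nhds (by norm_num) (by norm_num)
  filter_upwards [hmem] with t ht
  have := key t (abs_le.mpr ht)
  simpa [abs_pow] using this

lemma iteratedDeriv_monomial (c : E) (k : ℕ) :
    ∀ i, iteratedDeriv i (fun t : ℝ => t ^ k • c)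
      = fun t => ((k.descFactorial i : ℝ) * t ^ (k - i)) • c := by
  intro i
  induction i with
  | zero => funext t; simp
  | succ i ih =>
    rw [iteratedDeriv_succ, ih]
    funext t
    have h : HasDerivAt (fun t : ℝ => ((k.descFactorial i : ℝ) * t ^ (k-i)) • c)
        ((((k - i : ℕ) : ℝ) * t ^ (k - i - 1) * (k.descFactorial i : ℝ)) • c) t := by
      have h1 := (hasDerivAt_pow (k - i) t).const_mul ((k.descFactorial i : ℝ))
      have h2 := h1.smul_const c
      convert h2 using 1
      ring_nf
    rw [h.deriv]
    congr 1
    rw [Nat.descFactorial_succ]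
    push_cast
    rw [show k - (i+1) = k - i - 1 by omega]
    ring

lemma iteratedDeriv_monomial_zero_lt (c : E) {k i : ℕ} (h : i < k) :
    iteratedDeriv i (fun t : ℝ => t ^ k • c) 0 = 0 := by
  rw [iteratedDeriv_monomial]
  have : (0:ℝ) ^ (k - i) = 0 := zero_pow (by omega)
  simp [this]

lemma iteratedDeriv_monomial_zero_self (c : E) (k : ℕ) :
    iteratedDeriv k (fun t : ℝ => t ^ k • c) 0 = (Nat.factorial k : ℝ) • c := by
  rw [iteratedDeriv_monomial]
  simp [Nat.descFactorial_self]

lemma monomial_smooth (c : E) (k : ℕ) : ContDiff ℝ ∞ (fun t : ℝ => t ^ k • c) :=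
  (contDiff_id.pow k).smul contDiff_const

lemma iteratedDeriv_sub' {f g : ℝ → E} (hf : ContDiff ℝ ∞ f) (hg : ContDiff ℝ ∞ g)
    (i : ℕ) (x : ℝ) :
    iteratedDeriv i (fun t => f t - g t) x = iteratedDeriv i f x - iteratedDeriv i g x := by
  have : (fun t => f t - g t) = f - g := rfl
  rw [this]
  simp only [← iteratedDerivWithin_univ]
  exact iteratedDerivWithin_sub (mem_univ x) uniqueDiffOn_univ
    ((hf.of_le (nat_le_inf i)).contDiffAt.contDiffWithinAt) ((hg.of_le (nat_le_inf i)).contDiffAt.contDiffWithinAt)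

/-- monomial forced to vanish. -/
lemma eq_zero_of_monomial_isBigO {c : E} {i : ℕ}
    (h : (fun t : ℝ => t ^ i • c) =O[𝓝 (0:ℝ)] fun t => t ^ (i+1)) : c = 0 := by
  rw [isBigO_iff] at h
  obtain ⟨K, hK⟩ := h
  have hev : ∀ᶠ t in 𝓝[≠] (0:ℝ), ‖c‖ ≤ K * |t| := by
    filter_upwards [hK.filter_mono nhdsWithin_le_nhds, self_mem_nhdsWithin] with t ht ht0
    have hpos : (0:ℝ) < |t| ^ i := pow_pos (abs_pos.mpr ht0) i
    rw [norm_smul] at ht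
    simp only [Real.norm_eq_abs, abs_pow] at ht
    have : |t| ^ i * ‖c‖ ≤ |t| ^ i * (K * |t|) := by
      calc |t| ^ i * ‖c‖ ≤ K * |t| ^ (i+1) := ht
      _ = |t| ^ i * (K * |t|) := by ring
    exact (mul_le_mul_iff_right₀ hpos).mp this
  have htend : Tendsto (fun t : ℝ => K * |t|) (𝓝[≠] (0:ℝ)) (𝓝 0) := by
    have : Tendsto (fun t : ℝ => K * |t|) (𝓝 (0:ℝ)) (𝓝 (K * |0|)) :=
      (continuous_const.mul continuous_abs).tendsto 0
    simpa using this.mono_left nhdsWithin_le_nhds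
  have := ge_of_tendsto htend hev
  exact norm_le_zero_iff.mp this

lemma pow_isBigO_pow {a b : ℕ} (h : b ≤ a) :
    (fun t : ℝ => t ^ a) =O[𝓝 (0:ℝ)] fun t => t ^ b := by
  rw [isBigO_iff]
  refine ⟨1, ?_⟩
  filter_upwards [Icc_mem_nhds (by norm_num : (-1:ℝ) < 0) (by norm_num : (0:ℝ) < 1)] with t ht
  simp only [Real.norm_eq_abs, abs_pow, one_mul]
  exact pow_le_pow_of_le_one (abs_nonneg t) (abs_le.mpr ht) h

/-- L2: big-O of order `m` forces vanishing of the first `m` iterated derivatives. -/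
lemma iteratedDeriv_zero_of_isBigO {f : ℝ → E} (hf : ContDiff ℝ ∞ f) (m : ℕ)
    (h : f =O[𝓝 (0:ℝ)] fun t => t ^ m) : ∀ i < m, iteratedDeriv i f 0 = 0 := by
  intro i him
  induction i using Nat.strong_induction_on with
  | _ i IH =>
  set c : E := (Nat.factorial i : ℝ)⁻¹ • iteratedDeriv i f 0 with hc
  set g : ℝ → E := fun t => f t - t ^ i • c with hg
  have hgsm : ContDiff ℝ ∞ g := hf.sub (monomial_smooth c i)
  have hg0 : ∀ k ≤ i, iteratedDeriv k g 0 = 0 := by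
    intro k hk
    rw [hg, iteratedDeriv_sub' hf (monomial_smooth c i)]
    rcases lt_or_eq_of_le hk with hlt | rfl
    · rw [IH k hlt (lt_trans hlt him), iteratedDeriv_monomial_zero_lt c hlt, sub_zero]
    · rw [iteratedDeriv_monomial_zero_self, hc, smul_inv_smul₀]
      · exact sub_self _
      · exact_mod_cast Nat.factorial_ne_zero k
  have hgO : g =O[𝓝 (0:ℝ)] fun t => t ^ (i+1) := isBigO_of_iteratedDeriv_zero hgsm i hg0
  have hfO : f =O[𝓝 (0:ℝ)] fun t => t ^ (i+1) := h.trans (pow_isBigO_pow (by omega))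
  have hmono : (fun t : ℝ => t ^ i • c) =O[𝓝 (0:ℝ)] fun t => t ^ (i+1) := by
    have : (fun t : ℝ => t ^ i • c) = fun t => f t - g t := by
      funext t; rw [hg]; exact (sub_sub_cancel _ _).symm
    rw [this]
    exact hfO.sub hgO
  have hczero : c = 0 := eq_zero_of_monomial_isBigO hmono
  have : iteratedDeriv i f 0 = (Nat.factorial i : ℝ) • c := by
    rw [hc, smul_inv_smul₀]
    exact_mod_cast Nat.factorial_ne_zero i
  rw [this, hczero, smul_zero]

end Toolbox

section Slice
variable {E : Type*} [NormedAddCommGroup E] [NormedSpace ℝ E]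

lemma one_le_inf : (1 : WithTop ℕ∞) ≤ ∞ := by decide
lemma two_le_inf : (2 : WithTop ℕ∞) ≤ ∞ := by decide

noncomputable def Dt (g : ℝ × ℝ → E) : ℝ × ℝ → E := fun q => fderiv ℝ g q (1, 0)
noncomputable def Dh (g : ℝ × ℝ → E) : ℝ × ℝ → E := fun q => fderiv ℝ g q (0, 1)

lemma Dt_smooth {g : ℝ × ℝ → E} (hg : ContDiff ℝ ∞ g) : ContDiff ℝ ∞ (Dt g) :=
  (hg.fderiv_right inf_add_one_le).clm_apply contDiff_const

lemma Dh_smooth {g : ℝ × ℝ → E} (hg : ContDiff ℝ ∞ g) : ContDiff ℝ ∞ (Dh g) :=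
  (hg.fderiv_right inf_add_one_le).clm_apply contDiff_const

lemma hasDerivAt_slice_t {g : ℝ × ℝ → E} (hg : ContDiff ℝ ∞ g) (t h : ℝ) :
    HasDerivAt (fun t' => g (t', h)) (Dt g (t, h)) t := by
  have hd : HasFDerivAt g (fderiv ℝ g (t, h)) (t, h) :=
    ((hg.differentiable (zero_lt_one.trans_le one_le_inf).ne') (t, h)).hasFDerivAt
  have hin : HasDerivAt (fun t' : ℝ => (t', h)) ((1:ℝ), (0:ℝ)) t :=
    (hasDerivAt_id t).prodMk (hasDerivAt_const t h)
  exact hd.comp_hasDerivAt t hin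

lemma hasDerivAt_slice_h {g : ℝ × ℝ → E} (hg : ContDiff ℝ ∞ g) (t s : ℝ) :
    HasDerivAt (fun s' => g (t, s')) (Dh g (t, s)) s := by
  have hd : HasFDerivAt g (fderiv ℝ g (t, s)) (t, s) :=
    ((hg.differentiable (zero_lt_one.trans_le one_le_inf).ne') (t, s)).hasFDerivAt
  have hin : HasDerivAt (fun s' : ℝ => (t, s')) ((0:ℝ), (1:ℝ)) s :=
    (hasDerivAt_const s t).prodMk (hasDerivAt_id s)
  exact hd.comp_hasDerivAt s hin

lemma fderiv_clm_apply_const {g : ℝ × ℝ → E} (hg : ContDiff ℝ ∞ g) (v q : ℝ × ℝ) :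
    fderiv ℝ (fun q' => fderiv ℝ g q' v) q = (fderiv ℝ (fderiv ℝ g) q).flip v := by
  have hdiff : DifferentiableAt ℝ (fderiv ℝ g) q :=
    ((hg.fderiv_right inf_add_one_le).differentiable (zero_lt_one.trans_le one_le_inf).ne') q
  have := fderiv_clm_apply (c := fderiv ℝ g) (u := fun _ => v) hdiff (differentiableAt_const v)
  simpa using this

lemma Dt_Dh_comm {g : ℝ × ℝ → E} (hg : ContDiff ℝ ∞ g) : Dt (Dh g) = Dh (Dt g) := by
  funext q
  have hsym := (hg.contDiffAt (x := q)).isSymmSndFDerivAt (by rw [minSmoothness_of_isRCLikeNormedField]; exact two_le_inf)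
  show fderiv ℝ (Dh g) q (1, 0) = fderiv ℝ (Dt g) q (0, 1)
  have h1 : fderiv ℝ (Dh g) q = (fderiv ℝ (fderiv ℝ g) q).flip ((0:ℝ), (1:ℝ)) :=
    fderiv_clm_apply_const hg _ q
  have h2 : fderiv ℝ (Dt g) q = (fderiv ℝ (fderiv ℝ g) q).flip ((1:ℝ), (0:ℝ)) :=
    fderiv_clm_apply_const hg _ q
  rw [h1, h2]
  simp only [ContinuousLinearMap.flip_apply]
  exact hsym _ _

lemma Dt_iter_smooth {g : ℝ × ℝ → E} (hg : ContDiff ℝ ∞ g) (k : ℕ) :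
    ContDiff ℝ ∞ (Dt^[k] g) := by
  induction k generalizing g with
  | zero => exact hg
  | succ k ih => rw [Function.iterate_succ_apply]; exact ih (Dt_smooth hg)

lemma iter_slice : ∀ (k : ℕ) (g : ℝ × ℝ → E), ContDiff ℝ ∞ g → ∀ t h,
    iteratedDeriv k (fun t' => g (t', h)) t = (Dt^[k] g) (t, h) := by
  intro k
  induction k with
  | zero => intro g hg t h; simp
  | succ k ih =>
    intro g hg t h
    rw [iteratedDeriv_succ']
    have hder : deriv (fun t' => g (t', h)) = fun t' => Dt g (t', h) :=
      funext fun t' => (hasDerivAt_slice_t hg t' h).deriv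
    rw [hder, ih (Dt g) (Dt_smooth hg) t h, Function.iterate_succ_apply]

lemma Dh_iter_comm : ∀ (k : ℕ) (g : ℝ × ℝ → E), ContDiff ℝ ∞ g →
    Dt^[k] (Dh g) = Dh (Dt^[k] g) := by
  intro k
  induction k with
  | zero => intro g _; rfl
  | succ k ih =>
    intro g hg
    rw [Function.iterate_succ_apply, Dt_Dh_comm hg, ih (Dt g) (Dt_smooth hg),
      Function.iterate_succ_apply]

lemma Dh_zero_of_slice_zero {g : ℝ × ℝ → E} (hg : ContDiff ℝ ∞ g)
    (hz : ∀ s, g (0, s) = 0) (h : ℝ) : Dh g (0, h) = 0 := by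
  have h1 : HasDerivAt (fun s => g (0, s)) (Dh g (0, h)) h := hasDerivAt_slice_h hg 0 h
  have h2 : (fun s => g (0, s)) = fun _ => (0:E) := funext hz
  rw [h2] at h1
  exact h1.unique (hasDerivAt_const h (0:E))

end Slice

section ODE
variable {E : Type*} [NormedAddCommGroup E] [NormedSpace ℝ E]

lemma flow_smooth {F : E → E} (hF : ContDiff ℝ (⊤ : ℕ∞) F) {φ : ℝ → E → E}
    (hφ : ∀ t u, HasDerivAt (fun s => φ s u) (F (φ t u)) t) (v : E) :
    ContDiff ℝ ∞ (fun t => φ t v) := by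
  rw [contDiff_infty]
  intro n
  induction n with
  | zero =>
    rw [show ((0:ℕ) : WithTop ℕ∞) = 0 by rfl, contDiff_zero]
    exact Differentiable.continuous (fun t => (hφ t v).differentiableAt)
  | succ n ih =>
    rw [show ((n+1 : ℕ) : WithTop ℕ∞) = (n : WithTop ℕ∞) + 1 by push_cast; rfl]
    rw [contDiff_succ_iff_deriv]
    refine ⟨fun t => (hφ t v).differentiableAt, ?_, ?_⟩
    · intro hω
      exact absurd hω (by simp)
    · have hd : deriv (fun t => φ t v) = fun t => F (φ t v) :=
        funext fun t => (hφ t v).deriv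
      rw [hd]
      exact (hF.of_le (by exact_mod_cast le_top)).comp ih

lemma F_lipschitz_ball [ProperSpace E] {F : E → E} (hF : ContDiff ℝ (⊤ : ℕ∞) F) (R : ℝ) :
    ∃ K : NNReal, LipschitzOnWith K F (Metric.closedBall (0:E) R) := by
  obtain ⟨M, hM⟩ := (isCompact_closedBall (0:E) R).exists_bound_of_continuousOn
    (((hF.fderiv_right (m := ∞) (by simp)).continuous).continuousOn)
  refine ⟨M.toNNReal, Convex.lipschitzOnWith_of_nnnorm_fderiv_le
    (fun x _ => (hF.differentiable (by simp)) x) ?_ (convex_closedBall _ _)⟩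
  intro x hx
  rw [← NNReal.coe_le_coe]
  simp only [coe_nnnorm, Real.coe_toNNReal']
  exact le_trans (hM x hx) (le_max_left _ _)

lemma flow_group [ProperSpace E] {F : E → E} (hF : ContDiff ℝ (⊤ : ℕ∞) F) {φ : ℝ → E → E}
    (hφ0 : ∀ u, φ 0 u = u) (hφ : ∀ t u, HasDerivAt (fun s => φ s u) (F (φ t u)) t)
    (v : E) (h t : ℝ) : φ t (φ h v) = φ (t + h) v := by
  set b : ℝ := |t| + 1 with hb
  set c : ℝ := b + |h| with hc
  obtain ⟨R₁, hR₁⟩ := (isCompact_Icc (a := -c) (b := c)).exists_bound_of_continuousOn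
    (Differentiable.continuous (fun s => (hφ s v).differentiableAt)).continuousOn
  obtain ⟨R₂, hR₂⟩ := (isCompact_Icc (a := -c) (b := c)).exists_bound_of_continuousOn
    (Differentiable.continuous (fun s => (hφ s (φ h v)).differentiableAt)).continuousOn
  set R : ℝ := max R₁ R₂ with hR
  obtain ⟨K, hK⟩ := F_lipschitz_ball hF (E := E) R
  have key := ODE_solution_unique_of_mem_Ioo (v := fun _ x => F x)
    (s := fun _ => Metric.closedBall (0:E) R) (K := K)
    (f := fun s => φ (s + h) v) (g := fun s => φ s (φ h v))
    (t₀ := 0) (a := -b) (b := b)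
    (fun _ _ => hK) (by constructor <;> [linarith [abs_nonneg t]; linarith [abs_nonneg t]]) ?_ ?_ ?_
  · have ht' : t ∈ Ioo (-b) b := by
      constructor <;> [linarith [neg_abs_le t]; linarith [le_abs_self t]]
    exact (key ht').symm
  · intro s hs
    constructor
    · have h1 := HasDerivAt.scomp s (hφ (s + h) v) ((hasDerivAt_id s).add_const h)
      simpa [Function.comp_def] using h1
    · rw [Metric.mem_closedBall, dist_zero_right]
      refine le_trans (hR₁ (s + h) ?_) (le_max_left _ _)
      have h1 : |s| ≤ b := le_of_lt (abs_lt.mpr ⟨hs.1, hs.2⟩)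
      have h2 : |s + h| ≤ c := le_trans (abs_add_le s h) (by rw [hc]; linarith)
      exact Set.mem_Icc.mpr (abs_le.mp h2)
  · intro s hs
    constructor
    · exact hφ s (φ h v)
    · rw [Metric.mem_closedBall, dist_zero_right]
      refine le_trans (hR₂ s ?_) (le_max_right _ _)
      have h1 : |s| ≤ b := le_of_lt (abs_lt.mpr ⟨hs.1, hs.2⟩)
      have h2 : |s| ≤ c := by rw [hc]; linarith [abs_nonneg h]
      exact Set.mem_Icc.mpr (abs_le.mp h2)
  · simp [zero_add, hφ0]

end ODE

/-- If a smooth one-step method `S` on `ℝⁿ` satisfies the symmetry relation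
`S(-h, S(h,u)) = u` for all `h` near `0` and all `u`, and approximates the
exact flow `φ` of the smooth ODE `u' = F(u)` with local error expansion
`S(h,u) - φ(h,u) = C(u) h^(p+1) + O(h^(p+2))` with `p` odd, then `C(u) = 0`;
that is, symmetric one-step schemes have even order. -/
theorem stmt8 {n : ℕ} (p : ℕ) (hp : Odd p)
    (F : EuclideanSpace ℝ (Fin n) → EuclideanSpace ℝ (Fin n))
    (hF : ContDiff ℝ (⊤ : ℕ∞) F)
    (S φ : ℝ → EuclideanSpace ℝ (Fin n) → EuclideanSpace ℝ (Fin n))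
    (hS : ContDiff ℝ (⊤ : ℕ∞) fun q : ℝ × EuclideanSpace ℝ (Fin n) => S q.1 q.2)
    (hφ0 : ∀ u, φ 0 u = u)
    (hφ : ∀ t u, HasDerivAt (fun s => φ s u) (F (φ t u)) t)
    (hsym : ∀ᶠ h : ℝ in nhds 0, ∀ u, S (-h) (S h u) = u)
    (C : EuclideanSpace ℝ (Fin n) → EuclideanSpace ℝ (Fin n))
    (herr : ∀ u,
      (fun h : ℝ => S h u - φ h u - h ^ (p + 1) • C u) =O[nhds 0] fun h : ℝ => h ^ (p + 2)) :
    ∀ u, C u = 0 := by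
  intro u
  have hS' : ContDiff ℝ ∞ (fun q : ℝ × EuclideanSpace ℝ (Fin n) => S q.1 q.2) := hS.of_le (by simp)
  -- S 0 is the identity
  have hS0 : ∀ v, S 0 v = v := by
    intro v
    obtain ⟨K, hK⟩ := isBigO_iff.mp (herr v)
    have h0 := hK.self_of_nhds
    have e1 : (0:ℝ) ^ (p+1) = 0 := zero_pow (by omega)
    have e2 : (0:ℝ) ^ (p+2) = 0 := zero_pow (by omega)
    rw [e1, e2, hφ0 v] at h0
    simp only [zero_smul, sub_zero, norm_zero, mul_zero] at h0
    have := norm_le_zero_iff.mp h0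
    exact sub_eq_zero.mp this
  have φsm : ∀ v : EuclideanSpace ℝ (Fin n), ContDiff ℝ ∞ (fun t => φ t v) := flow_smooth hF hφ
  have grp : ∀ (v : EuclideanSpace ℝ (Fin n)) (h t : ℝ), φ t (φ h v) = φ (t + h) v := flow_group hF hφ0 hφ
  -- smoothness of the local error in t
  have fvsm : ∀ v : EuclideanSpace ℝ (Fin n), ContDiff ℝ ∞ (fun t => S t v - φ t v) := by
    intro v
    have h1 : ContDiff ℝ ∞ (fun t : ℝ => S t v) := hS'.comp (contDiff_id.prodMk contDiff_const)
    exact h1.sub (φsm v)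
  -- order p+1 vanishing of the local error at every point
  have ordv : ∀ v : EuclideanSpace ℝ (Fin n), ∀ i ≤ p, iteratedDeriv i (fun t => S t v - φ t v) 0 = 0 := by
    intro v i hi
    have h2 : (fun t : ℝ => t ^ (p+1) • C v) =O[𝓝 (0:ℝ)] fun t => t ^ (p+1) := by
      rw [isBigO_iff]
      refine ⟨‖C v‖, Eventually.of_forall fun t => ?_⟩
      rw [norm_smul]
      exact le_of_eq (mul_comm _ _)
    have h3 : (fun t : ℝ => S t v - φ t v) =O[𝓝 (0:ℝ)] fun t => t ^ (p+1) := by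
      have e : (fun t : ℝ => S t v - φ t v)
          = fun t => (S t v - φ t v - t ^ (p+1) • C v) + t ^ (p+1) • C v := by
        funext t; rw [sub_add_cancel]
      rw [e]
      exact ((herr v).trans (pow_isBigO_pow (by omega))).add h2
    exact iteratedDeriv_zero_of_isBigO (fvsm v) (p+1) h3 i (by omega)
  -- the local error function at `u`
  set d : ℝ → EuclideanSpace ℝ (Fin n) := fun h => S h u - φ h u with hd
  have dO : d =O[𝓝 (0:ℝ)] fun h => h ^ (p+1) := by
    have h2 : (fun t : ℝ => t ^ (p+1) • C u) =O[𝓝 (0:ℝ)] fun t => t ^ (p+1) := by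
      rw [isBigO_iff]
      refine ⟨‖C u‖, Eventually.of_forall fun t => ?_⟩
      rw [norm_smul]
      exact le_of_eq (mul_comm _ _)
    have e : d = fun t => (S t u - φ t u - t ^ (p+1) • C u) + t ^ (p+1) • C u := by
      funext t; rw [hd, sub_add_cancel]
    rw [e]
    exact ((herr u).trans (pow_isBigO_pow (by omega))).add h2
  have heven : Even (p+1) := hp.add_one
  have dneg : (fun h : ℝ => d (-h) - h ^ (p+1) • C u) =O[𝓝 (0:ℝ)] fun h => h ^ (p+2) := by
    have hneg : Tendsto (fun h : ℝ => -h) (𝓝 0) (𝓝 0) := by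
      simpa using (continuous_neg.tendsto (0:ℝ))
    have h1 := (herr u).comp_tendsto hneg
    have e : ((fun h : ℝ => S h u - φ h u - h ^ (p + 1) • C u) ∘ fun h => -h)
        = fun h : ℝ => d (-h) - h ^ (p+1) • C u := by
      funext h
      simp only [Function.comp_apply, hd]
      rw [heven.neg_pow]
    rw [e] at h1
    refine h1.trans ?_
    refine isBigO_of_le _ fun h => ?_
    simp only [Function.comp_apply, Real.norm_eq_abs, abs_pow, abs_neg]
    exact le_rfl
  -- ### Step 1 : symmetry + mean value estimate
  set A : ℝ × ℝ → (EuclideanSpace ℝ (Fin n) →L[ℝ] EuclideanSpace ℝ (Fin n)) :=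
    fun q => fderiv ℝ (fun a => S (-q.1) a) (φ q.1 u + q.2 • d q.1) with hA
  have hAsm : ContDiff ℝ ∞ A := by
    apply ContDiff.fderiv (f := fun (q : ℝ × ℝ) (a : EuclideanSpace ℝ (Fin n)) => S (-q.1) a)
      (g := fun q : ℝ × ℝ => φ q.1 u + q.2 • d q.1) (m := ∞)
    · exact hS.comp (((contDiff_fst.comp (contDiff_fst (E := ℝ × ℝ) (F := EuclideanSpace ℝ (Fin n)))).neg).prodMk contDiff_snd)
    · exact ((φsm u).comp contDiff_fst).add (contDiff_snd.smul ((fvsm u).comp contDiff_fst))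
    · exact inf_add_one_le
  have hA0 : ∀ t : ℝ, A (0, t) = ContinuousLinearMap.id ℝ (EuclideanSpace ℝ (Fin n)) := by
    intro t
    have e : (fun a : EuclideanSpace ℝ (Fin n) => S (-(0:ℝ)) a) = id := by
      funext a; rw [neg_zero, hS0]; rfl
    show fderiv ℝ (fun a : EuclideanSpace ℝ (Fin n) => S (-(0:ℝ)) a) _ = _
    rw [e, fderiv_id]
  set Atil : ℝ × ℝ → (EuclideanSpace ℝ (Fin n) →L[ℝ] EuclideanSpace ℝ (Fin n)) := fun q => A q - ContinuousLinearMap.id ℝ (EuclideanSpace ℝ (Fin n)) with hAtil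
  have hAtsm : ContDiff ℝ ∞ Atil := hAsm.sub contDiff_const
  obtain ⟨L, hL⟩ := ((isCompact_Icc (a := (-1:ℝ)) (b := 1)).prod
      (isCompact_Icc (a := (-1:ℝ)) (b := 1))).exists_bound_of_continuousOn
    ((Dt_smooth hAtsm).continuous.continuousOn)
  set L' := max L 0 with hL'
  have hAbound : ∀ h t : ℝ, |h| ≤ 1 → |t| ≤ 1 → ‖Atil (h, t)‖ ≤ L' * |h| := by
    intro h t hh ht
    apply norm_le_of_hasDerivAt_zero (f := fun s => Atil (s, t)) (f' := fun s => Dt Atil (s, t))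
    · intro s _; exact hasDerivAt_slice_t hAtsm s t
    · rw [hAtil]; simp only; rw [hA0 t, sub_self]
    · intro s hs
      have hsle : |s| ≤ 1 := le_trans (abs_le_of_mem_uIcc hs) hh
      refine le_trans (hL (s, t) ⟨abs_le.mp hsle, abs_le.mp ht⟩) (le_max_left _ _)
  set Q : ℝ → EuclideanSpace ℝ (Fin n) := fun h => S (-h) (S h u) - S (-h) (φ h u) - d h with hQ
  have hQbound : ∀ h : ℝ, |h| ≤ 1 → ‖Q h‖ ≤ L' * |h| * ‖d h‖ := by
    intro h hh
    set γ : ℝ → EuclideanSpace ℝ (Fin n) := fun t => S (-h) (φ h u + t • d h) - t • d h with hγ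
    have hder : ∀ t : ℝ, HasDerivAt γ (Atil (h, t) (d h)) t := by
      intro t
      have hinner : HasDerivAt (fun t : ℝ => φ h u + t • d h) (d h) t := by
        have := (hasDerivAt_id t).smul_const (d h)
        simpa using this
      have houter : HasFDerivAt (fun a : EuclideanSpace ℝ (Fin n) => S (-h) a) (A (h, t)) (φ h u + t • d h) := by
        have hdiff : DifferentiableAt ℝ (fun a : EuclideanSpace ℝ (Fin n) => S (-h) a) (φ h u + t • d h) := by
          have hsm : ContDiff ℝ ∞ (fun a : EuclideanSpace ℝ (Fin n) => S (-h) a) :=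
            hS'.comp (contDiff_const.prodMk contDiff_id)
          exact (hsm.differentiable (zero_lt_one.trans_le one_le_inf).ne') _
        exact hdiff.hasFDerivAt
      have hcomp := houter.comp_hasDerivAt t hinner
      have hsub := hcomp.sub ((hasDerivAt_id t).smul_const (d h))
      have e : A (h, t) (d h) - (1:ℝ) • d h = Atil (h, t) (d h) := by
        rw [hAtil]; simp [ContinuousLinearMap.sub_apply]
      rw [← e]
      exact hsub
    have hb : ∀ t ∈ Icc (0:ℝ) 1, ‖Atil (h, t) (d h)‖ ≤ L' * |h| * ‖d h‖ := by
      intro t ht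
      refine le_trans (ContinuousLinearMap.le_opNorm _ _) ?_
      have := hAbound h t hh (abs_le.mpr ⟨by linarith [ht.1], ht.2⟩)
      have hd0 : (0:ℝ) ≤ ‖d h‖ := norm_nonneg _
      nlinarith
    have := Convex.norm_image_sub_le_of_norm_hasDerivWithin_le
      (f := γ) (f' := fun t => Atil (h, t) (d h)) (s := Icc (0:ℝ) 1)
      (C := L' * |h| * ‖d h‖)
      (fun t _ => (hder t).hasDerivWithinAt) hb (convex_Icc 0 1)
      (by norm_num : (0:ℝ) ∈ Icc (0:ℝ) 1) (by norm_num : (1:ℝ) ∈ Icc (0:ℝ) 1)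
    have e : γ 1 - γ 0 = Q h := by
      rw [hγ, hQ, hd]
      simp only [one_smul, zero_smul, sub_zero, add_zero]
      have : φ h u + (S h u - φ h u) = S h u := by abel
      rw [this]
      abel
    rw [e] at this
    simpa using this
  have hQO : Q =O[𝓝 (0:ℝ)] fun h => h ^ (p+2) := by
    obtain ⟨K₁, hK₁⟩ := isBigO_iff.mp dO
    rw [isBigO_iff]
    refine ⟨L' * K₁, ?_⟩
    filter_upwards [hK₁, Icc_mem_nhds (by norm_num : (-1:ℝ) < 0) (by norm_num : (0:ℝ) < 1)]
      with h hdh hmem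
    have hh : |h| ≤ 1 := abs_le.mpr hmem
    have h1 := hQbound h hh
    have h2 : L' * |h| * ‖d h‖ ≤ L' * |h| * (K₁ * ‖h ^ (p+1)‖) := by
      have : (0:ℝ) ≤ L' * |h| := mul_nonneg (le_max_right L 0) (abs_nonneg h)
      exact mul_le_mul_of_nonneg_left hdh this
    refine le_trans h1 (le_trans h2 (le_of_eq ?_))
    simp only [Real.norm_eq_abs, abs_pow]
    ring
  -- ### Step 2 : two-variable estimate via the flow group property
  set G : ℝ × ℝ → EuclideanSpace ℝ (Fin n) := fun q => S q.1 (φ q.2 u) - φ (q.1 + q.2) u with hG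
  have hGsm : ContDiff ℝ ∞ G :=
    (hS'.comp (contDiff_fst.prodMk ((φsm u).comp contDiff_snd))).sub
      ((φsm u).comp (contDiff_fst.add contDiff_snd))
  have hslice0 : ∀ k ≤ p, ∀ h : ℝ, (Dt^[k] G) (0, h) = 0 := by
    intro k hk h
    rw [← iter_slice k G hGsm 0 h]
    have e : (fun t => G (t, h)) = fun t => S t (φ h u) - φ t (φ h u) := by
      funext t
      rw [hG]
      simp only
      rw [grp u h t]
    rw [e]
    exact ordv (φ h u) k hk
  set u0 : ℝ × ℝ → EuclideanSpace ℝ (Fin n) := Dh G with hu0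
  have hu0sm : ContDiff ℝ ∞ u0 := Dh_smooth hGsm
  have hvan : ∀ k ≤ p, ∀ h : ℝ, (Dt^[k] u0) (0, h) = 0 := by
    intro k hk h
    rw [hu0, Dh_iter_comm k G hGsm]
    exact Dh_zero_of_slice_zero (Dt_iter_smooth hGsm k) (fun s => hslice0 k hk s) h
  obtain ⟨M, hM⟩ := ((isCompact_Icc (a := (-1:ℝ)) (b := 1)).prod
      (isCompact_Icc (a := (-1:ℝ)) (b := 1))).exists_bound_of_continuousOn
    ((Dt_iter_smooth hu0sm (p+1)).continuous.continuousOn)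
  set M' := max M 0 with hM'
  have hu0b : ∀ t h : ℝ, |t| ≤ 1 → |h| ≤ 1 → ‖u0 (t, h)‖ ≤ M' * |t| ^ (p+1) := by
    intro t h ht hh
    have key := key_bound (le_max_right M 0) p (fun i => fun t => (Dt^[i] u0) (t, h))
      (fun i _ t => by
        show HasDerivAt (fun t' => Dt^[i] u0 (t', h)) ((Dt^[i+1] u0) (t, h)) t
        have e : Dt^[i+1] u0 = Dt (Dt^[i] u0) := Function.iterate_succ_apply' Dt i u0
        rw [e]
        exact hasDerivAt_slice_t (Dt_iter_smooth hu0sm i) t h)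
      (fun i hi => hvan i hi h)
      (fun s hs => le_trans (hM (s, h) ⟨abs_le.mp hs, abs_le.mp hh⟩) (le_max_left _ _)) t ht
    simpa using key
  have hKey : ∀ h : ℝ, |h| ≤ 1 → ‖G (-h, h) - G (-h, 0)‖ ≤ M' * |h| ^ (p+1) * |h| := by
    intro h hh
    have hb : ∀ s ∈ uIcc (0:ℝ) h, ‖u0 (-h, s)‖ ≤ M' * |h| ^ (p+1) := by
      intro s hs
      have h1 := hu0b (-h) s (by rwa [abs_neg]) (le_trans (abs_le_of_mem_uIcc hs) hh)
      rwa [abs_neg] at h1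
    have := Convex.norm_image_sub_le_of_norm_hasDerivWithin_le
      (f := fun s => G (-h, s)) (f' := fun s => u0 (-h, s)) (s := uIcc (0:ℝ) h)
      (C := M' * |h| ^ (p+1))
      (fun s _ => (hasDerivAt_slice_h hGsm (-h) s).hasDerivWithinAt) hb (convex_uIcc 0 h)
      left_mem_uIcc right_mem_uIcc
    simpa [Real.norm_eq_abs] using this
  have hKeyO : (fun h : ℝ => G (-h, h) - G (-h, 0)) =O[𝓝 (0:ℝ)] fun h => h ^ (p+2) := by
    rw [isBigO_iff]
    refine ⟨M', ?_⟩
    filter_upwards [Icc_mem_nhds (by norm_num : (-1:ℝ) < 0) (by norm_num : (0:ℝ) < 1)]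
      with h hmem
    refine le_trans (hKey h (abs_le.mpr hmem)) (le_of_eq ?_)
    simp only [Real.norm_eq_abs, abs_pow]
    ring
  -- ### Final assembly
  have hGh : ∀ h : ℝ, G (-h, h) = S (-h) (φ h u) - u := by
    intro h
    rw [hG]
    simp only [neg_add_cancel, hφ0]
  have hG0 : ∀ h : ℝ, G (-h, 0) = d (-h) := by
    intro h
    rw [hG, hd]
    simp only [add_zero, hφ0]
  have E2 : (fun h : ℝ => S (-h) (φ h u) - u - d (-h)) =O[𝓝 (0:ℝ)] fun h => h ^ (p+2) := by
    have e : (fun h : ℝ => G (-h, h) - G (-h, 0))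
        = fun h : ℝ => S (-h) (φ h u) - u - d (-h) := by
      funext h; rw [hGh, hG0]
    rwa [e] at hKeyO
  have ev : Q =ᶠ[𝓝 (0:ℝ)] fun h => u - S (-h) (φ h u) - d h := by
    filter_upwards [hsym] with h hs
    rw [hQ]
    simp only
    rw [hs u]
  have E1 : (fun h : ℝ => u - S (-h) (φ h u) - d h) =O[𝓝 (0:ℝ)] fun h => h ^ (p+2) :=
    hQO.congr' ev EventuallyEq.rfl
  have sumO : (fun h : ℝ => d h + d (-h)) =O[𝓝 (0:ℝ)] fun h => h ^ (p+2) := by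
    have t1 := E1.add E2
    have e : (fun h : ℝ => (u - S (-h) (φ h u) - d h) + (S (-h) (φ h u) - u - d (-h)))
        = fun h : ℝ => -(d h + d (-h)) := by
      funext h; abel
    rw [e] at t1
    have t2 := t1.neg_left
    simpa using t2
  have t3 := (herr u).add dneg
  have t4 : (fun h : ℝ => h ^ (p+1) • ((2:ℝ) • C u)) =O[𝓝 (0:ℝ)] fun h => h ^ (p+2) := by
    have e : (fun h : ℝ => (d h + d (-h))
          - ((S h u - φ h u - h ^ (p+1) • C u) + (d (-h) - h ^ (p+1) • C u)))
        = fun h : ℝ => h ^ (p+1) • ((2:ℝ) • C u) := by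
      funext h
      rw [hd]
      simp only
      module
    rw [← e]
    exact sumO.sub t3
  have h2 : (2:ℝ) • C u = 0 := eq_zero_of_monomial_isBigO t4
  have := smul_eq_zero.mp h2
  rcases this with h | h
  · norm_num at h
  · exact h
end
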